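/- arXiv:1808.00593 — 4 statements merged into one kernel-verified Lean document; each statement's English description precedes it below -/
import Mathlib

section
/- (Concatenation across two maps avoids the intersection) Let M1, M2 ⊆ X, let (T1, σ1) and (T2, σ2) be trajectories (so 0 ≤ T1 and 0 ≤ T2) with σ1 T1 = σ2 0, and suppose (T1, σ1) avoids M1 and (T2, σ2) avoids M2. Let (T1 + T2, τ) be their concatenation. Then τ 0 = σ1 0, τ (T1 + T2) = σ2 T2, and (T1 + T2, τ) avoids M1 ∩ M2. This is the paper's claim that S_{M1}(x1, x2) + S_{M2}(x2, x3) ⊆ S_{M1 ∩ M2}(x1, x3). -/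
open Set ENNReal

/-- A trajectory: a duration `T ≥ 0` together with a curve `σ : ℝ → X`.
Its start state is `σ 0` and its terminal state is `σ T`. -/
structure Traj (X : Type*) where
  T : ℝ
  hT : 0 ≤ T
  σ : ℝ → X

/-- A trajectory avoids an obstacle set `M` if it never enters `M` on `[0, T)`. -/
def Traj.avoids {X : Type*} (τ : Traj X) (M : Set X) : Prop :=
  ∀ t ∈ Set.Ico (0 : ℝ) τ.T, τ.σ t ∉ M

-- The obstacle-adjusted cost: `C τ` if `τ` avoids `M`, and `∞` otherwise.
open Classical in
noncomputable def costOn {X : Type*} (C : Traj X → ℝ≥0∞) (M : Set X) (τ : Traj X) : ℝ≥0∞ :=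
  if τ.avoids M then C τ else ⊤

/-- Concatenation of two trajectories (meaningful when `τ1.σ τ1.T = τ2.σ 0`). -/
noncomputable def Traj.concat {X : Type*} (τ1 τ2 : Traj X) : Traj X where
  T := τ1.T + τ2.T
  hT := add_nonneg τ1.hT τ2.hT
  σ := fun t => if t < τ1.T then τ1.σ t else τ2.σ (t - τ1.T)

/-- **Concatenation across two maps avoids the intersection**:
`S_{M1}(x1, x2) + S_{M2}(x2, x3) ⊆ S_{M1 ∩ M2}(x1, x3)`. -/
theorem concat_avoids_inter {X : Type*} (M1 M2 : Set X) (τ1 τ2 : Traj X)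
    (hjoin : τ1.σ τ1.T = τ2.σ 0) (h1 : τ1.avoids M1) (h2 : τ2.avoids M2) :
    (τ1.concat τ2).σ 0 = τ1.σ 0 ∧
    (τ1.concat τ2).σ (τ1.T + τ2.T) = τ2.σ τ2.T ∧
    (τ1.concat τ2).avoids (M1 ∩ M2) := by
  refine ⟨?_, ?_, ?_⟩
  · simp only [Traj.concat]
    rcases lt_or_eq_of_le τ1.hT with h | h
    · simp [h]
    · simp [← h]; rw [← hjoin, ← h]
  · simp only [Traj.concat]
    rw [if_neg (by linarith [τ2.hT]), add_sub_cancel_left]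
  · intro t ht hmem
    simp only [Traj.concat, Set.mem_Ico] at ht hmem
    by_cases hlt : t < τ1.T
    · rw [if_pos hlt] at hmem
      exact h1 t ⟨ht.1, hlt⟩ hmem.1
    · rw [if_neg hlt] at hmem
      exact h2 (t - τ1.T) ⟨by linarith [not_lt.mp hlt], by linarith [ht.2]⟩ hmem.2
end

section
/- (Jointed trajectories upper-bound the optimum: the provable direction of Lemma 2) Fix states s, i, g ∈ X and an obstacle set M ⊆ X. Suppose that to each ordered pair of states (a, b) is assigned a set S(a, b) of trajectories each of which has start state a and terminal state b, and that these sets are closed under concatenation: if (T1, σ1) ∈ S(s, i) and (T2, σ2) ∈ S(i, g) then their concatenation belongs to S(s, g). Suppose the cost function C satisfies the triangle inequality: whenever σ1's terminal state equals σ2's start state, C of the concatenation of (T1, σ1) and (T2, σ2) is at most C(T1, σ1) + C(T2, σ2). Then ⨅_{σ ∈ S(s, g)} C_M(σ) ≤ (⨅_{σ1 ∈ S(s, i)} C_M(σ1)) + (⨅_{σ2 ∈ S(i, g)} C_M(σ2)). -/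
open Set ENNReal

/-- **Jointed trajectories upper-bound the optimum (provable direction of Lemma 2).** -/
theorem jointed_upper_bound {X : Type*} (C : Traj X → ℝ≥0∞) (M : Set X) (s i g : X)
    (S : X → X → Set (Traj X))
    (hends : ∀ a b : X, ∀ τ ∈ S a b, τ.σ 0 = a ∧ τ.σ τ.T = b)
    (hclosed : ∀ τ1 ∈ S s i, ∀ τ2 ∈ S i g, τ1.concat τ2 ∈ S s g)
    (htriangle : ∀ τ1 τ2 : Traj X, τ1.σ τ1.T = τ2.σ 0 →
      C (τ1.concat τ2) ≤ C τ1 + C τ2) :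
    (⨅ τ ∈ S s g, costOn C M τ) ≤
      (⨅ τ1 ∈ S s i, costOn C M τ1) + ⨅ τ2 ∈ S i g, costOn C M τ2 := by

  have key : ∀ τ1 ∈ S s i, ∀ τ2 ∈ S i g,
      (⨅ τ ∈ S s g, costOn C M τ) ≤ costOn C M τ1 + costOn C M τ2 := by
    intro τ1 h1 τ2 h2
    by_cases ha1 : τ1.avoids M
    · by_cases ha2 : τ2.avoids M
      · have hend : τ1.σ τ1.T = τ2.σ 0 := by
          rw [(hends s i τ1 h1).2, (hends i g τ2 h2).1]
        have havoid : (τ1.concat τ2).avoids M := by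
          intro t ht
          simp only [Traj.concat, Set.mem_Ico] at ht ⊢
          by_cases hlt : t < τ1.T
          · simp only [hlt, if_pos]
            exact ha1 t ⟨ht.1, hlt⟩
          · simp only [hlt, if_neg, if_false]
            refine ha2 (t - τ1.T) ⟨by linarith [not_lt.mp hlt], by linarith [ht.2]⟩
        calc (⨅ τ ∈ S s g, costOn C M τ) ≤ costOn C M (τ1.concat τ2) :=
              iInf₂_le _ (hclosed τ1 h1 τ2 h2)
          _ = C (τ1.concat τ2) := if_pos havoid
          _ ≤ C τ1 + C τ2 := htriangle τ1 τ2 hend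
          _ = costOn C M τ1 + costOn C M τ2 := by
              rw [costOn, costOn, if_pos ha1, if_pos ha2]
      · simp [costOn, ha2]
    · simp [costOn, ha1]
  simp only [iInf_subtype']
  rw [ENNReal.iInf_add]
  refine le_iInf fun τ1 => ?_
  rw [ENNReal.add_iInf]
  exact le_iInf fun τ2 => by simpa only [iInf_subtype'] using key τ1 τ1.2 τ2 τ2.2
end

section
/- (Lemma 4, Set of Incomplete Sets) Fix states s, g ∈ X, an obstacle set M ⊆ X, a set B ⊆ X of boundary states, for each ordered pair of states (a, b) a set F(a, b) of free-space trajectories and a set S(a, b) of trajectories. For states a, b and an obstacle set N, define the sub-map lower bound L(a, b, N) = min( ⨅_{σ ∈ F(a, b)} C(σ), ⨅_{j ∈ B} ⨅_{N1 ⊆ N} ⨅_{N2 ⊆ N} ⨅_{σ1 ∈ S(a, j)} ⨅_{σ2 ∈ S(j, b)} (C_{N1}(σ1) + C_{N2}(σ2)) ). Define cLt = min( ⨅_{σ ∈ F(s, g)} C(σ), ⨅_{i ∈ B} ⨅_{M1 ⊆ M} ⨅_{M2 ⊆ M} ⨅_{σ1 ∈ S(s, i)} ⨅_{σ2 ∈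 S(i, g)} (C_{M1}(σ1) + C_{M2}(σ2)) ) and cLtLt = min( ⨅_{σ ∈ F(s, g)} C(σ), ⨅_{i ∈ B} ⨅_{M1 ⊆ M} ⨅_{M2 ⊆ M} (L(s, i, M1) + L(i, g, M2)) ). Assume the free-space sets are free-space optimal: for all states a, b and every σ ∈ S(a, b), ⨅_{τ ∈ F(a, b)} C(τ) ≤ C(σ). Then cLtLt ≤ cLt. -/
open Set ENNReal

/-- The sub-map lower bound `L(a, b, N)` of a sub-problem. -/
noncomputable def subMapLowerBound {X : Type*} (C : Traj X → ℝ≥0∞) (B : Set X)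
    (F S : X → X → Set (Traj X)) (a b : X) (N : Set X) : ℝ≥0∞ :=
  min (⨅ τ ∈ F a b, C τ)
    (⨅ j ∈ B, ⨅ N1 ⊆ N, ⨅ N2 ⊆ N, ⨅ τ1 ∈ S a j, ⨅ τ2 ∈ S j b,
      (costOn C N1 τ1 + costOn C N2 τ2))

/-- **Lemma 4 (Set of Incomplete Sets).** -/
theorem set_of_incomplete_sets {X : Type*} (C : Traj X → ℝ≥0∞) (s g : X) (M B : Set X)
    (F S : X → X → Set (Traj X))
    (hfree : ∀ a b : X, ∀ τ ∈ S a b, (⨅ τ' ∈ F a b, C τ') ≤ C τ) :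
    min (⨅ τ ∈ F s g, C τ)
      (⨅ i ∈ B, ⨅ M1 ⊆ M, ⨅ M2 ⊆ M,
        (subMapLowerBound C B F S s i M1 + subMapLowerBound C B F S i g M2)) ≤
    min (⨅ τ ∈ F s g, C τ)
      (⨅ i ∈ B, ⨅ M1 ⊆ M, ⨅ M2 ⊆ M, ⨅ τ1 ∈ S s i, ⨅ τ2 ∈ S i g,
        (costOn C M1 τ1 + costOn C M2 τ2)) := by
  have key : ∀ a b : X, ∀ N : Set X, ∀ τ ∈ S a b,
      subMapLowerBound C B F S a b N ≤ costOn C N τ := by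
    intro a b N τ hτ
    calc subMapLowerBound C B F S a b N ≤ ⨅ τ' ∈ F a b, C τ' := min_le_left _ _
      _ ≤ C τ := hfree a b τ hτ
      _ ≤ costOn C N τ := by
          unfold costOn; split <;> simp
  refine min_le_min le_rfl ?_
  refine iInf_mono fun i => iInf_mono fun _ => iInf_mono fun M1 => iInf_mono fun _ =>
    iInf_mono fun M2 => iInf_mono fun _ => ?_
  refine le_iInf₂ fun τ1 h1 => le_iInf₂ fun τ2 h2 => ?_
  exact add_le_add (key s i M1 τ1 h1) (key i g M2 τ2 h2)
end

section
/- (Chained lower bound: combination of Lemmas 3 and 4) Fix states s, g ∈ X, an obstacle set M ⊆ X, a set B ⊆ X of boundary states, for each ordered pair of states (a, b) a set F(a, b) of free-space trajectories and a set S(a, b) of trajectories, and assume the free-space sets are free-space optimal: for all states a, b and every σ ∈ S(a, b), ⨅_{τ ∈ F(a, b)} C(τ) ≤ C(σ). Define the jointed cost cEq = min( ⨅_{σ ∈ F(s, g)} C_M(σ), ⨅_{i ∈ B} ⨅_{σ1 ∈ S(s, i)} ⨅_{σ2 ∈ S(i, g)} (C_M(σ1) + C_M(σ2)) ); for states a,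 b and an obstacle set N define L(a, b, N) = min( ⨅_{σ ∈ F(a, b)} C(σ), ⨅_{j ∈ B} ⨅_{N1 ⊆ N} ⨅_{N2 ⊆ N} ⨅_{σ1 ∈ S(a, j)} ⨅_{σ2 ∈ S(j, b)} (C_{N1}(σ1) + C_{N2}(σ2)) ); and define cLtLt = min( ⨅_{σ ∈ F(s, g)} C(σ), ⨅_{i ∈ B} ⨅_{M1 ⊆ M} ⨅_{M2 ⊆ M} (L(s, i, M1) + L(i, g, M2)) ). Then cLtLt ≤ cEq: the doubly sub-map lower-bound value never exceeds the jointed cost on the full map. -/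
open Set ENNReal

/-- **Chained lower bound (combination of Lemmas 3 and 4).** The doubly sub-map
lower-bound value never exceeds the jointed cost on the full map. -/
theorem chained_lower_bound {X : Type*} (C : Traj X → ℝ≥0∞) (s g : X) (M B : Set X)
    (F S : X → X → Set (Traj X))
    (hfree : ∀ a b : X, ∀ τ ∈ S a b, (⨅ τ' ∈ F a b, C τ') ≤ C τ) :
    min (⨅ τ ∈ F s g, C τ)
      (⨅ i ∈ B, ⨅ M1 ⊆ M, ⨅ M2 ⊆ M,
        (subMapLowerBound C B F S s i M1 + subMapLowerBound C B F S i g M2)) ≤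
    min (⨅ τ ∈ F s g, costOn C M τ)
      (⨅ i ∈ B, ⨅ τ1 ∈ S s i, ⨅ τ2 ∈ S i g,
        (costOn C M τ1 + costOn C M τ2)) := by
  have hle : ∀ (N : Set X) (τ : Traj X), C τ ≤ costOn C N τ := by
    intro N τ; unfold costOn; split_ifs <;> simp
  apply le_min
  · exact le_trans (min_le_left _ _) (iInf₂_mono fun τ _ => hle M τ)
  · refine le_trans (min_le_right _ _) ?_
    refine iInf₂_mono fun i hi => ?_
    refine iInf₂_le_of_le M (subset_refl M) (iInf₂_le_of_le M (subset_refl M) ?_)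
    refine le_iInf₂ fun τ1 h1 => le_iInf₂ fun τ2 h2 => ?_
    gcongr
    · exact le_trans (min_le_left _ _) (le_trans (hfree s i τ1 h1) (hle M τ1))
    · exact le_trans (min_le_left _ _) (le_trans (hfree i g τ2 h2) (hle M τ2))
end
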